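/- Let G be a discrete group and let A ⊆ ℓ¹(G) be a subalgebra (under convolution) containing δ_s for all s ∈ G. Suppose there exists f ∈ A with Σ_{s∈G} f(s) = 0, f ≠ 0, and (δ_s − δ_e) * f = δ_s − δ_e for all s ∈ G. Then G is finite. -/
import Mathlib


/-- If `A ⊆ ℓ¹(G)` contains a nonzero `f` with `∑ f = 0` and
`(δ_s − δ_e) * f = δ_s − δ_e` for all `s ∈ G` (convolution), then `G` is
finite. -/
theorem stmt_14 (G : Type*) [Group G] [DecidableEq G] (f : G → ℂ)
    (hsum : Summable f)
    (htsum : ∑' s, f s = 0)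
    (hne : f ≠ 0)
    (hconv : ∀ s t : G,
      f (s⁻¹ * t) - f t = (if t = s then (1 : ℂ) else 0) - (if t = 1 then 1 else 0)) :
    Finite G := by
  by_contra h
  rw [not_finite_iff_infinite] at h
  -- From hconv with t = 1: f (s⁻¹) - f 1 = δ(1=s) - 1
  have key : ∀ s : G, s ≠ 1 → f s = f 1 - 1 := by
    intro s hs
    have := hconv s⁻¹ 1
    simp only [inv_inv, mul_one, eq_self_iff_true, if_true] at this
    rw [if_neg (fun hh => hs (by simpa using hh.symm))] at this
    linear_combination this
  -- f tends to 0 along cofinite, and equals const (f 1 - 1) cofinitely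
  have hzero : f 1 - 1 = 0 := by
    have h1 : Filter.Tendsto f Filter.cofinite (nhds 0) :=
      hsum.tendsto_cofinite_zero
    have h2 : f =ᶠ[Filter.cofinite] fun _ => f 1 - 1 := by
      have : {s : G | ¬ f s = f 1 - 1} ⊆ {1} := by
        intro s hs
        by_contra hs1
        exact hs (key s (by simpa using hs1))
      exact (Set.Finite.subset (Set.finite_singleton 1) this)
    have h3 : Filter.Tendsto (fun _ : G => f 1 - 1) Filter.cofinite (nhds 0) :=
      h1.congr' h2
    exact tendsto_nhds_unique tendsto_const_nhds h3
  have hf1 : f 1 = 1 := by linear_combination hzero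
  have hf0 : ∀ s : G, s ≠ 1 → f s = 0 := fun s hs => by
    rw [key s hs, hzero]
  have : ∑' s, f s = 1 := by
    rw [tsum_eq_single 1 (fun b hb => hf0 b hb), hf1]
  rw [htsum] at this
  exact one_ne_zero this.symm
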